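/- arXiv:2108.12875 — 3 statements merged into one kernel-verified Lean document; each statement's English description precedes it below -/
import Mathlib

section
/- For points p₁, …, p_{n+1} in ℝⁿ, the mixed volume of the n+1 line segments conv{p̂ᵢ, e_{n+1}} ⊂ ℝ^{n+1}, where p̂ᵢ = (pᵢ, 0) is the embedding of pᵢ into ℝ^{n+1} and e_{n+1} is the last standard basis vector, equals |det[[1,…,1],[p₁,…,p_{n+1}]]|. -/
open MeasureTheory Pointwise

noncomputable def mixedVol {E : Type*} [AddCommMonoid E] [MeasureSpace E]
    (m : ℕ) (K : Fin m → Set E) : ℝ :=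
  ∑ S : Finset (Fin m), (-1 : ℝ) ^ (m - S.card) * (volume (∑ i ∈ S, K i)).toReal

noncomputable def emb (n m : ℕ) (p : EuclideanSpace ℝ (Fin n)) : EuclideanSpace ℝ (Fin m) :=
  WithLp.toLp 2 (fun i : Fin m => if h : (i : ℕ) < n then p ⟨i, h⟩ else 0)

noncomputable def simplexOf (n m : ℕ) (p : EuclideanSpace ℝ (Fin n)) :
    Set (EuclideanSpace ℝ (Fin m)) :=
  convexHull ℝ (insert (emb n m p)
    {x | ∃ j : Fin m, n ≤ (j : ℕ) ∧ x = EuclideanSpace.single j 1})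

/-!
Translating by `-e`, where `e` is the common endpoint, turns the segments into `[0, vᵢ]` with
`vᵢ = p̂ᵢ - e`, and a Minkowski sum of translates is a translate of the sum, so every term of
the inclusion–exclusion formula is the volume of a zonotope `∑_{i ∈ S} [0, vᵢ]`. For
`S ≠ univ` it lies in the span of fewer than `n + 1` vectors, hence is null, and only the full
parallelepiped of the `vᵢ` survives. Its volume is the absolute determinant of the `vᵢ`, whose
matrix is the given one with its rows rotated and the row of ones replaced by minus ones.
-/

open Module Finset

section Segments

variable {E : Type*} [NormedAddCommGroup E] [NormedSpace ℝ E]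

lemma segment_eq_vadd_segment_zero (x e : E) : segment ℝ x e = e +ᵥ segment ℝ 0 (x - e) := by
  rw [← Set.image_vadd]
  simp only [vadd_eq_add]
  rw [segment_translate_image, add_zero, add_sub_cancel]
  exact segment_symm ℝ x e

lemma sum_segment_eq_vadd_sum_segment_zero {ι : Type*} (q : ι → E) (e : E) (S : Finset ι) :
    ∑ i ∈ S, segment ℝ (q i) e = (#S • e) +ᵥ ∑ i ∈ S, segment ℝ 0 (q i - e) := by
  induction S using Finset.cons_induction with
  | empty => simp
  | cons a S ha ih =>
    rw [sum_cons, sum_cons, ih, segment_eq_vadd_segment_zero, vadd_add_vadd, card_cons, succ_nsmul']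

lemma sum_segment_zero_subset_span {ι : Type*} (v : ι → E) (S : Finset ι) :
    ∑ i ∈ S, segment ℝ 0 (v i) ⊆ Submodule.span ℝ (v '' S) := by
  intro x hx
  obtain ⟨g, hg, rfl⟩ := (Set.mem_finsetSum _ _ _).1 hx
  refine Submodule.sum_mem _ fun i hi => ?_
  have := hg hi
  rw [segment_eq_image'] at this
  obtain ⟨t, -, hgt⟩ := this
  simp only [← hgt, zero_add, sub_zero]
  exact Submodule.smul_mem _ t (Submodule.subset_span ⟨i, hi, rfl⟩)

variable [MeasurableSpace E] [BorelSpace E] [FiniteDimensional ℝ E]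

lemma addHaar_sum_segment_zero_eq_zero (μ : Measure E) [μ.IsAddHaarMeasure] {ι : Type*}
    (v : ι → E) {S : Finset ι} (hS : #S < finrank ℝ E) :
    μ (∑ i ∈ S, segment ℝ 0 (v i)) = 0 := by
  classical
  refine measure_mono_null (sum_segment_zero_subset_span v S) (Measure.addHaar_submodule μ _ ?_)
  intro htop
  have := (finrank_span_finset_le_card (R := ℝ) (S.image v)).trans card_image_le
  rw [coe_image, Set.finrank, htop, finrank_top] at this
  omega

end Segments

theorem mixedVol_segment_eq_volume_parallelepiped {E : Type*} [NormedAddCommGroup E]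
    [NormedSpace ℝ E] [FiniteDimensional ℝ E] [MeasureSpace E] [BorelSpace E]
    [(volume : Measure E).IsAddHaarMeasure] {m : ℕ} (hm : finrank ℝ E = m) (q : Fin m → E)
    (e : E) :
    mixedVol m (fun i => segment ℝ (q i) e) =
      (volume (parallelepiped fun i => q i - e)).toReal := by
  unfold mixedVol
  simp only [sum_segment_eq_vadd_sum_segment_zero, measure_vadd]
  rw [sum_eq_single univ]
  · simp [parallelepiped_eq_sum_segment]
  · intro S _ hS
    rw [addHaar_sum_segment_zero_eq_zero _ _ (by simpa [hm] using (card_lt_iff_ne_univ S).2 hS)]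
    simp
  · simp

theorem EuclideanSpace.volume_parallelepiped {ι : Type*} [Fintype ι] [DecidableEq ι]
    (v : ι → EuclideanSpace ℝ ι) :
    volume (parallelepiped v) = ENNReal.ofReal |(Matrix.of fun i j => v j i).det| := by
  rw [← (EuclideanSpace.basisFun ι ℝ).addHaar_eq_volume, Measure.addHaar_parallelepiped,
    Basis.det_apply]
  rfl

lemma abs_det_emb_sub_single_last {n : ℕ} (p : Fin (n + 1) → EuclideanSpace ℝ (Fin n)) :
    |(Matrix.of fun i j => (emb n (n + 1) (p j) - EuclideanSpace.single (Fin.last n) 1 :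
      EuclideanSpace ℝ (Fin (n + 1))) i).det| =
      |(Matrix.of fun i j : Fin (n + 1) => Fin.cases (1 : ℝ) (fun k => p j k) i).det| := by
  set M : Matrix (Fin (n + 1)) (Fin (n + 1)) ℝ :=
    Matrix.of fun i j => Fin.cases (1 : ℝ) (fun k => p j k) i
  have h : (Matrix.of fun i j => (emb n (n + 1) (p j) - EuclideanSpace.single (Fin.last n) 1 :
      EuclideanSpace ℝ (Fin (n + 1))) i) =
      Matrix.diagonal (Fin.snoc (fun _ => 1) (-1)) * M.submatrix (finRotate (n + 1)) id := by
    ext i j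
    rw [Matrix.diagonal_mul]
    induction i using Fin.lastCases with
    | last => simp [M, emb]
    | cast k => simp [M, emb, Fin.coeSucc_eq_succ, (Fin.castSucc_lt_last k).ne]
  rw [h, Matrix.det_mul, Matrix.det_permute, Matrix.det_diagonal, Fin.prod_univ_castSucc]
  simp [abs_mul]

theorem stmt1 (n : ℕ) (p : Fin (n + 1) → EuclideanSpace ℝ (Fin n)) :
    mixedVol (n + 1) (fun i =>
        segment ℝ (emb n (n + 1) (p i)) (EuclideanSpace.single (Fin.last n) 1)) =
      |(Matrix.of fun i j : Fin (n + 1) =>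
          Fin.cases (1 : ℝ) (fun k => p j k) i).det| := by
  rw [mixedVol_segment_eq_volume_parallelepiped finrank_euclideanSpace_fin,
    EuclideanSpace.volume_parallelepiped, ENNReal.toReal_ofReal (abs_nonneg _)]
  exact abs_det_emb_sub_single_last p
end

section
/- If there exist line segments Lᵢ ⊂ Δ(pᵢ), i = 1,…,m, with linearly independent direction vectors in ℝ^m, where Δ(p) = conv{(p,0), e_{n+1},…,e_m}, then the points p₁,…,p_m affinely span ℝⁿ, i.e., conv{p₁,…,p_m} is full-dimensional. -/
open MeasureTheory Pointwise RealInnerProductSpace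

section InnerProductSpace

variable {E : Type*} [NormedAddCommGroup E] [InnerProductSpace ℝ E]

theorem exists_ne_zero_inner_eq_const_of_affineSpan_ne_top [FiniteDimensional ℝ E] {s : Set E} (hs : s.Nonempty)
    (h : affineSpan ℝ s ≠ ⊤) : ∃ w ≠ (0 : E), ∃ c : ℝ, ∀ x ∈ s, ⟪w, x⟫ = c := by
  rw [Ne, AffineSubspace.affineSpan_eq_top_iff_vectorSpan_eq_top_of_nonempty ℝ _ _ hs,
    ← Submodule.orthogonal_eq_bot_iff] at h
  obtain ⟨w, hw, hw0⟩ := Submodule.exists_mem_ne_zero_of_ne_bot h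
  obtain ⟨x₀, hx₀⟩ := hs
  refine ⟨w, hw0, ⟪w, x₀⟫, fun x hx => ?_⟩
  have hperp := (Submodule.mem_orthogonal' _ w).mp hw _ (vsub_mem_vectorSpan ℝ hx hx₀)
  rwa [vsub_eq_sub, inner_sub_right, sub_eq_zero] at hperp

theorem inner_eq_const_of_mem_convexHull {w : E} {c : ℝ} {s : Set E}
    (hs : ∀ y ∈ s, ⟪w, y⟫ = c) {x : E} (hx : x ∈ convexHull ℝ s) : ⟪w, x⟫ = c :=
  convexHull_min hs (convex_hyperplane (innerₛₗ ℝ w).isLinear c) hx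

theorem eq_zero_of_inner_eq_zero_of_linearIndependent [FiniteDimensional ℝ E] {ι : Type*} [Fintype ι] {d : ι → E}
    (hd : LinearIndependent ℝ d) (hcard : Fintype.card ι = Module.finrank ℝ E) {w : E}
    (hw : ∀ i, ⟪d i, w⟫ = 0) : w = 0 := by
  let b := basisOfLinearIndependentOfCardEqFinrank' d hd hcard
  refine InnerProductSpace.ext_inner_left_basis b fun i => ?_
  simpa [b] using hw i

end InnerProductSpace

noncomputable def padConst (m : ℕ) {n : ℕ} (w : EuclideanSpace ℝ (Fin n)) (c : ℝ) :
    EuclideanSpace ℝ (Fin m) :=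
  WithLp.toLp 2 (fun j : Fin m => if h : (j : ℕ) < n then w ⟨j, h⟩ else c)

section Pad

variable {n m : ℕ} (w : EuclideanSpace ℝ (Fin n)) (c : ℝ)

theorem inner_padConst_emb (hnm : n ≤ m) (q : EuclideanSpace ℝ (Fin n)) :
    ⟪padConst m w c, emb n m q⟫ = ⟪w, q⟫ := by
  rw [PiLp.inner_apply, PiLp.inner_apply,
    ← Finset.sum_subset (Finset.subset_univ (Finset.univ.map (Fin.castLEEmb hnm))),
    Finset.sum_map]
  · refine Finset.sum_congr rfl fun k _ => ?_
    simp [padConst, emb, k.isLt]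
  · intro j _ hj
    have hjn : ¬ (j : ℕ) < n := fun hlt => hj (Finset.mem_map.mpr ⟨⟨j, hlt⟩, by simp, rfl⟩)
    simp [emb, hjn]

theorem inner_padConst_single {j : Fin m} (hj : n ≤ (j : ℕ)) :
    ⟪padConst m w c, EuclideanSpace.single j 1⟫ = c := by
  rw [real_inner_comm, EuclideanSpace.inner_single_left]
  simp [padConst, Nat.not_lt.mpr hj]

theorem inner_padConst_of_mem_simplexOf (hnm : n ≤ m) {q : EuclideanSpace ℝ (Fin n)}
    (hq : ⟪w, q⟫ = c) {x : EuclideanSpace ℝ (Fin m)} (hx : x ∈ simplexOf n m q) :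
    ⟪padConst m w c, x⟫ = c := by
  refine inner_eq_const_of_mem_convexHull ?_ hx
  rintro y (rfl | ⟨j, hj, rfl⟩)
  · rw [inner_padConst_emb w c hnm, hq]
  · exact inner_padConst_single w c hj

theorem eq_zero_of_padConst_eq_zero (hnm : n ≤ m) (h : padConst m w c = 0) : w = 0 := by
  ext k
  have hk := congrArg (· ⟨k, k.isLt.trans_le hnm⟩) h
  simpa [padConst] using hk

end Pad

theorem stmt7_general (n m : ℕ) (hm : n < m)
    (p : Fin m → EuclideanSpace ℝ (Fin n))
    (u v : Fin m → EuclideanSpace ℝ (Fin m))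
    (hseg : ∀ i, segment ℝ (u i) (v i) ⊆ simplexOf n m (p i))
    (hind : LinearIndependent ℝ (fun i => v i - u i)) :
    affineSpan ℝ (Set.range p) = ⊤ := by
  by_contra h
  have : Nonempty (Fin m) := ⟨⟨n, hm⟩⟩
  obtain ⟨w, hw0, c, hwc⟩ :=
    exists_ne_zero_inner_eq_const_of_affineSpan_ne_top (Set.range_nonempty p) h
  have hΔ : ∀ i, ∀ x ∈ simplexOf n m (p i), ⟪padConst m w c, x⟫ = c := fun i _ hx =>
    inner_padConst_of_mem_simplexOf w c hm.le (hwc _ (Set.mem_range_self i)) hx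
  have hdir : ∀ i, ⟪v i - u i, padConst m w c⟫ = 0 := fun i => by
    rw [real_inner_comm, inner_sub_right, hΔ i _ (hseg i (right_mem_segment ℝ _ _)),
      hΔ i _ (hseg i (left_mem_segment ℝ _ _)), sub_self]
  refine hw0 (eq_zero_of_padConst_eq_zero w c hm.le ?_)
  exact eq_zero_of_inner_eq_zero_of_linearIndependent hind (by simp) hdir

theorem stmt7 (n m : ℕ) (hn : 0 < n) (hm : n < m)
    (p : Fin m → EuclideanSpace ℝ (Fin n))
    (u v : Fin m → EuclideanSpace ℝ (Fin m))
    (hseg : ∀ i, segment ℝ (u i) (v i) ⊆ simplexOf n m (p i))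
    (hind : LinearIndependent ℝ (fun i => v i - u i)) :
    affineSpan ℝ (Set.range p) = ⊤ :=
  stmt7_general n m hm p u v hseg hind
end

section
/- The quantity MV(Δ(p₁),…,Δ(p_m)), viewed as a function of (p₁,…,p_m) ∈ (ℝⁿ)^m, is homogeneous of degree n under uniform scaling: MV(Δ(λp₁),…,Δ(λp_m)) = λⁿ · MV(Δ(p₁),…,Δ(p_m)) for all λ > 0. -/
open MeasureTheory Pointwise

/-!
The linear map `T_λ` scaling the first `n` coordinates by `λ` fixes `e_{n+1}, …, e_m` and sends
`(p, 0)` to `(λp, 0)`, so it maps `Δ(p)` onto `Δ(λp)`. Being linear, it commutes with Minkowski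
sums and multiplies every volume by `|det T_λ| = λⁿ`; hence so does the inclusion–exclusion
formula defining the mixed volume.
-/

theorem mixedVol_image_linearMap {E : Type*} [NormedAddCommGroup E] [NormedSpace ℝ E]
    [MeasureSpace E] [BorelSpace E] [FiniteDimensional ℝ E] [(volume : Measure E).IsAddHaarMeasure]
    (f : E →ₗ[ℝ] E) (m : ℕ) (K : Fin m → Set E) :
    mixedVol m (fun i => f '' K i) = |LinearMap.det f| * mixedVol m K := by
  simp only [mixedVol, Finset.mul_sum, ← Set.image_finsetSum, Measure.addHaar_image_linearMap,
    ENNReal.toReal_mul, ENNReal.toReal_ofReal (abs_nonneg _), mul_left_comm]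

noncomputable def scaleFirstCoords (n m : ℕ) (lam : ℝ) :
    EuclideanSpace ℝ (Fin m) →ₗ[ℝ] EuclideanSpace ℝ (Fin m) :=
  Matrix.toEuclideanLin (Matrix.diagonal fun i : Fin m => if (i : ℕ) < n then lam else 1)

theorem scaleFirstCoords_apply (n m : ℕ) (lam : ℝ) (x : EuclideanSpace ℝ (Fin m)) (i : Fin m) :
    scaleFirstCoords n m lam x i = if (i : ℕ) < n then lam * x i else x i := by
  simp [scaleFirstCoords, Matrix.mulVec_diagonal]

theorem det_scaleFirstCoords {n m : ℕ} (hnm : n ≤ m) (lam : ℝ) :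
    LinearMap.det (scaleFirstCoords n m lam) = lam ^ n := by
  simp [scaleFirstCoords, LinearMap.det_toLpLin, Finset.prod_ite, Fin.card_filter_val_lt, hnm]

theorem scaleFirstCoords_emb (n m : ℕ) (lam : ℝ) (q : EuclideanSpace ℝ (Fin n)) :
    scaleFirstCoords n m lam (emb n m q) = emb n m (lam • q) := by
  ext i
  by_cases h : (i : ℕ) < n <;> simp [scaleFirstCoords_apply, emb, h]

theorem scaleFirstCoords_single {n m : ℕ} (lam : ℝ) {j : Fin m} (hj : n ≤ j) :
    scaleFirstCoords n m lam (EuclideanSpace.single j 1) = EuclideanSpace.single j 1 := by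
  ext i
  by_cases h : (i : ℕ) < n
  · have hij : i ≠ j := by rintro rfl; omega
    simp [scaleFirstCoords_apply, h, hij]
  · simp [scaleFirstCoords_apply, h]

theorem image_scaleFirstCoords_simplexOf (n m : ℕ) (lam : ℝ) (q : EuclideanSpace ℝ (Fin n)) :
    scaleFirstCoords n m lam '' simplexOf n m q = simplexOf n m (lam • q) := by
  rw [simplexOf, simplexOf, LinearMap.image_convexHull, Set.image_insert_eq,
    scaleFirstCoords_emb]
  congr 2
  ext x
  constructor
  · rintro ⟨_, ⟨j, hj, rfl⟩, rfl⟩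
    exact ⟨j, hj, scaleFirstCoords_single lam hj⟩
  · rintro ⟨j, hj, rfl⟩
    exact ⟨_, ⟨j, hj, rfl⟩, scaleFirstCoords_single lam hj⟩

theorem stmt9_general (n m : ℕ) (hm : n < m)
    (p : Fin m → EuclideanSpace ℝ (Fin n)) (lam : ℝ) (hlam : 0 < lam) :
    mixedVol m (fun i => simplexOf n m (lam • p i)) =
      lam ^ n * mixedVol m (fun i => simplexOf n m (p i)) := by
  simp only [← image_scaleFirstCoords_simplexOf n m lam]
  rw [mixedVol_image_linearMap, det_scaleFirstCoords hm.le, abs_of_pos (pow_pos hlam n)]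

theorem stmt9 (n m : ℕ) (hn : 0 < n) (hm : n < m)
    (p : Fin m → EuclideanSpace ℝ (Fin n)) (lam : ℝ) (hlam : 0 < lam) :
    mixedVol m (fun i => simplexOf n m (lam • p i)) =
      lam ^ n * mixedVol m (fun i => simplexOf n m (p i)) :=
  stmt9_general n m hm p lam hlam
end
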